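/- arXiv:2510.24091 — 3 statements merged into one kernel-verified Lean document; each statement's English description precedes it below -/
import Mathlib

section
/- The set of admissible mirrors on $\mathcal{P}$, i.e. bijections $\pi : \mathcal{P} \to \mathcal{P}$ satisfying the reversibility condition $\pi(-\pi(p)) = -p$ for all $p$ and the no-U-turn condition $\pi(p) \neq -p$ for all $p$, has cardinality $(2d-1)!! = 1\cdot 3\cdot 5\cdots(2d-1)$. -/
/-- The velocity set `𝒫 = {±e₁, …, ±e_d} ⊆ ℤ^d`. -/
def velocitySet (d : ℕ) : Finset (Fin d → ℤ) :=
  (Finset.univ.image fun i : Fin d => Pi.single i (1 : ℤ)) ∪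
    (Finset.univ.image fun i : Fin d => -Pi.single i (1 : ℤ))

/-- An admissible mirror: a bijection `π` of `𝒫` satisfying the reversibility
condition `π(-π(p)) = -p` (phrased via the element `q ∈ 𝒫` with `q = -π(p)`)
and the no-U-turn condition `π(p) ≠ -p`. -/
def IsAdmissibleMirror {d : ℕ}
    (π : {v // v ∈ velocitySet d} ≃ {v // v ∈ velocitySet d}) : Prop :=
  (∀ p q : {v // v ∈ velocitySet d},
      (q : Fin d → ℤ) = -(π p : Fin d → ℤ) → (π q : Fin d → ℤ) = -(p : Fin d → ℤ)) ∧
    ∀ p : {v // v ∈ velocitySet d}, (π p : Fin d → ℤ) ≠ -(p : Fin d → ℤ)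

/-!
Composing a mirror `π` with the negation `p ↦ -p` turns the reversibility condition into
`(-π) ∘ (-π) = id` and the no-U-turn condition into `-π` having no fixed point, so admissible
mirrors correspond to the fixed-point-free involutions of the `2d`-element set `𝒫`. On a set of
size `2n + 2` such an involution is determined by the partner `b` of a fixed point `a`
(`2n + 1` choices) and a fixed-point-free involution of the remaining `2n` points, which gives
the count `(2n + 1)‼`.
-/

open Equiv Equiv.Perm Function
open scoped Nat

section FixedPointFreeInvolution

variable {α : Type*}

def IsFixedPointFreeInvolution (τ : Perm α) : Prop :=
  Involutive τ ∧ ∀ x, τ x ≠ x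

theorem Function.Involutive.apply_ne_and_ne_iff {f : α → α} (hf : Involutive f) {a b : α}
    (hab : f a = b) (y : α) : (f y ≠ a ∧ f y ≠ b) ↔ (y ≠ a ∧ y ≠ b) := by
  rw [Ne, Ne, hf.eq_iff, hf.eq_iff, hab, ← hab, hf a]
  exact and_comm

theorem IsFixedPointFreeInvolution.subtypePerm {p : α → Prop} {τ : Perm α}
    (hτ : IsFixedPointFreeInvolution τ) (h : ∀ x, p (τ x) ↔ p x) :
    IsFixedPointFreeInvolution (τ.subtypePerm h) :=
  ⟨fun y => Subtype.ext (hτ.1 y), fun y hy => hτ.2 y (congrArg Subtype.val hy)⟩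

variable [DecidableEq α]

def Equiv.Perm.extendBySwap (a b : α) (σ : Perm {y // y ≠ a ∧ y ≠ b}) : Perm α :=
  swap a b * Perm.ofSubtype σ

section ExtendBySwap

variable {a b : α} (σ : Perm {y // y ≠ a ∧ y ≠ b})

theorem Equiv.Perm.extendBySwap_apply_left : extendBySwap a b σ a = b := by
  simp [extendBySwap, Perm.ofSubtype_apply_of_not_mem]

theorem Equiv.Perm.extendBySwap_apply_right : extendBySwap a b σ b = a := by
  simp [extendBySwap, Perm.ofSubtype_apply_of_not_mem]

theorem Equiv.Perm.extendBySwap_apply_coe (y : {y // y ≠ a ∧ y ≠ b}) :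
    extendBySwap a b σ y = σ y := by
  simp [extendBySwap, Perm.ofSubtype_apply_coe, swap_apply_of_ne_of_ne (σ y).2.1 (σ y).2.2]

end ExtendBySwap

theorem IsFixedPointFreeInvolution.extendBySwap {a b : α} (hab : a ≠ b)
    {σ : Perm {y // y ≠ a ∧ y ≠ b}} (hσ : IsFixedPointFreeInvolution σ) :
    IsFixedPointFreeInvolution (extendBySwap a b σ) := by
  have trichotomy (x : α) : x = a ∨ x = b ∨ ∃ y : {y // y ≠ a ∧ y ≠ b}, x = y := by
    by_cases ha : x = a
    · exact .inl ha
    by_cases hb : x = b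
    · exact .inr (.inl hb)
    exact .inr (.inr ⟨⟨x, ha, hb⟩, rfl⟩)
  constructor
  · intro x
    rcases trichotomy x with rfl | rfl | ⟨y, rfl⟩
    · rw [extendBySwap_apply_left, extendBySwap_apply_right]
    · rw [extendBySwap_apply_right, extendBySwap_apply_left]
    · rw [extendBySwap_apply_coe, extendBySwap_apply_coe, hσ.1 y]
  · intro x
    rcases trichotomy x with rfl | rfl | ⟨y, rfl⟩
    · rw [extendBySwap_apply_left]; exact hab.symm
    · rw [extendBySwap_apply_right]; exact hab
    · rw [extendBySwap_apply_coe]; exact fun h => hσ.2 y (Subtype.ext h)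

def fixedPointFreeInvolutionApplyEquiv {a b : α} (hab : a ≠ b) :
    {τ : Perm α // IsFixedPointFreeInvolution τ ∧ τ a = b} ≃
      {σ : Perm {y // y ≠ a ∧ y ≠ b} // IsFixedPointFreeInvolution σ} where
  toFun τ := ⟨_, τ.2.1.subtypePerm (τ.2.1.1.apply_ne_and_ne_iff τ.2.2)⟩
  invFun σ := ⟨_, σ.2.extendBySwap hab, extendBySwap_apply_left σ.1⟩
  left_inv := by
    rintro ⟨τ, hτ, hτa⟩
    have hτb : τ b = a := by rw [← hτa, hτ.1 a]
    ext x
    by_cases ha : x = a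
    · rw [ha, extendBySwap_apply_left, hτa]
    by_cases hb : x = b
    · rw [hb, extendBySwap_apply_right, hτb]
    · exact extendBySwap_apply_coe _ ⟨x, ha, hb⟩
  right_inv σ := by
    ext y
    exact extendBySwap_apply_coe σ.1 y

def fixedPointFreeInvolutionSigmaEquiv (a : α) :
    {τ : Perm α // IsFixedPointFreeInvolution τ} ≃
      Σ b : {b // b ≠ a}, {σ : Perm {y // y ≠ a ∧ y ≠ b.1} // IsFixedPointFreeInvolution σ} :=
  calc
    _ ≃ Σ b : {b // b ≠ a}, {τ : Perm α // IsFixedPointFreeInvolution τ ∧ τ a = b} :=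
      { toFun τ := ⟨⟨τ.1 a, τ.2.2 a⟩, τ.1, τ.2, rfl⟩
        invFun τ := ⟨τ.2.1, τ.2.2.1⟩
        left_inv _ := rfl
        right_inv := by rintro ⟨⟨b, hb⟩, τ, hτ, hτa⟩; obtain rfl : τ a = b := hτa; rfl }
    _ ≃ _ := sigmaCongrRight fun b => fixedPointFreeInvolutionApplyEquiv b.2.symm

theorem card_isFixedPointFreeInvolution [Fintype α] {n : ℕ} (h : Fintype.card α = 2 * n) :
    Nat.card {τ : Perm α // IsFixedPointFreeInvolution τ} = (2 * n - 1)‼ := by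
  induction n generalizing α with
  | zero =>
    have : IsEmpty α := Fintype.card_eq_zero_iff.mp h
    exact Nat.card_eq_one_iff_unique.mpr ⟨inferInstance, ⟨1, isEmptyElim, isEmptyElim⟩⟩
  | succ n ih =>
    obtain ⟨a⟩ : Nonempty α := Fintype.card_pos_iff.mp (by omega)
    have card_ne : Fintype.card {b // b ≠ a} = 2 * n + 1 := by
      simp only [Fintype.card_subtype, Finset.filter_ne', Finset.mem_univ,
        Finset.card_erase_of_mem, Finset.card_univ, h]
      omega
    have card_ne_and_ne (b : {b // b ≠ a}) : Fintype.card {y // y ≠ a ∧ y ≠ b.1} = 2 * n := by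
      simp only [Fintype.card_subtype, Finset.filter_and, Finset.filter_ne', Finset.erase_inter,
        Finset.univ_inter, Finset.mem_erase, b.2.symm, Finset.card_erase_of_mem, Finset.card_univ,
        ne_eq, not_false_eq_true, Finset.mem_univ, and_self, h]
      omega
    rw [Nat.card_congr (fixedPointFreeInvolutionSigmaEquiv a), Nat.card_sigma,
      Finset.sum_congr rfl fun b _ => ih (card_ne_and_ne b), Finset.sum_const, Finset.card_univ,
      card_ne, smul_eq_mul, show 2 * (n + 1) - 1 = 2 * n + 1 by omega, Nat.doubleFactorial_add_one]

end FixedPointFreeInvolution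

section Mirror

variable {d : ℕ}

theorem neg_mem_velocitySet {v : Fin d → ℤ} (h : v ∈ velocitySet d) : -v ∈ velocitySet d := by
  simp only [velocitySet, Finset.mem_union, Finset.mem_image, Finset.mem_univ, true_and] at h ⊢
  rcases h with ⟨i, rfl⟩ | ⟨i, rfl⟩
  · exact .inr ⟨i, rfl⟩
  · exact .inl ⟨i, (neg_neg _).symm⟩

theorem card_velocitySet : (velocitySet d).card = 2 * d := by
  have single_injective : Injective fun i : Fin d => Pi.single i (1 : ℤ) := fun i j hij => by
    simpa [Pi.single_apply] using congrFun hij i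
  have disjoint : Disjoint (Finset.univ.image fun i : Fin d => Pi.single i (1 : ℤ))
      (Finset.univ.image fun i : Fin d => -Pi.single i (1 : ℤ)) := by
    simp only [Finset.disjoint_left, Finset.mem_image, Finset.mem_univ, true_and]
    rintro _ ⟨i, rfl⟩ ⟨j, hij⟩
    have := congrFun hij i
    by_cases h : j = i <;> simp [h] at this
  rw [velocitySet, Finset.card_union_of_disjoint disjoint,
    Finset.card_image_of_injective _ single_injective,
    Finset.card_image_of_injective _ fun i j h => single_injective (neg_injective h),
    Finset.card_univ, Fintype.card_fin, two_mul]

def velocityNeg (d : ℕ) : Perm {v // v ∈ velocitySet d} :=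
  (Equiv.neg (Fin d → ℤ)).subtypeEquiv fun _ =>
    ⟨neg_mem_velocitySet, fun h => by simpa using neg_mem_velocitySet h⟩

@[simp]
theorem coe_velocityNeg (p : {v // v ∈ velocitySet d}) : (velocityNeg d p : Fin d → ℤ) = -p := rfl

theorem isAdmissibleMirror_iff (π : Perm {v // v ∈ velocitySet d}) :
    IsAdmissibleMirror π ↔ IsFixedPointFreeInvolution (velocityNeg d * π) := by
  simp only [IsAdmissibleMirror, IsFixedPointFreeInvolution, Involutive, Perm.mul_apply,
    Subtype.ext_iff, coe_velocityNeg, ne_eq, neg_eq_iff_eq_neg]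
  refine and_congr ⟨fun h p => ?_, fun h p q hq => ?_⟩ Iff.rfl
  · rw [h p _ rfl]
  · obtain rfl : q = velocityNeg d (π p) := Subtype.ext hq
    exact h p

end Mirror

theorem card_admissible_mirrors_general (d : ℕ) :
    Nat.card {π : {v // v ∈ velocitySet d} ≃ {v // v ∈ velocitySet d} //
        IsAdmissibleMirror π} = Nat.doubleFactorial (2 * d - 1) := by
  rw [← card_isFixedPointFreeInvolution (α := {v // v ∈ velocitySet d})
    (by rw [Fintype.card_coe, card_velocitySet])]
  exact Nat.card_congr ((Equiv.mulLeft (velocityNeg d)).subtypeEquiv isAdmissibleMirror_iff)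

/-- The number of admissible mirrors on `𝒫 = {±e₁, …, ±e_d}` is the double
factorial `(2d-1)!! = 1·3·5⋯(2d-1)`. -/
theorem card_admissible_mirrors (d : ℕ) (hd : 1 ≤ d) :
    Nat.card {π : {v // v ∈ velocitySet d} ≃ {v // v ∈ velocitySet d} //
        IsAdmissibleMirror π} = Nat.doubleFactorial (2 * d - 1) :=
  card_admissible_mirrors_general d
end

section
/- For every mirror configuration $\pi$ and every $x \in I_N$, there exists $n$ with $1 \le n \le 2d\,|\Lambda_N|$ such that $F^n(x;\pi) \in O_N$ (where all intermediate iterates lie in $\mathcal{M}_N$). In particular the exit time $n_x = \inf\{n \ge 1 : F^n(x;\pi) \in O_N\}$ is finite and at most $2d\,|\Lambda_N| = 2d\,N M^{d-1}$. -/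
/-- Position space `X = ℤ × (ℤ/Mℤ)^{d-1}`: an unbounded slab coordinate and
`d-1` periodic transverse coordinates. -/
abbrev MirrorPos (d M : ℕ) := ℤ × (Fin (d - 1) → ZMod M)

/-- Velocity set `𝒫 = {±e₁, …, ±e_d}`: `(none, s)` is `±e₁` (the slab
direction) and `(some j, s)` is `±e_{j+2}` (a transverse direction), with the
sign recorded by the boolean `s`. -/
abbrev MirrorVel (d : ℕ) := Option (Fin (d - 1)) × Bool

/-- Negation of a velocity. -/
def velNeg {d : ℕ} (v : MirrorVel d) : MirrorVel d := (v.1, !v.2)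

/-- The sign `±1` attached to a boolean. -/
def bsign (b : Bool) : ℤ := if b then 1 else -1

/-- Translation of a position by a velocity: `±e₁` shifts the slab coordinate,
a transverse velocity shifts the corresponding periodic coordinate. -/
def velMove {d M : ℕ} (q : MirrorPos d M) (v : MirrorVel d) : MirrorPos d M :=
  match v.1 with
  | none => (q.1 + bsign v.2, q.2)
  | some j => (q.1, Function.update q.2 j (q.2 j + (bsign v.2 : ZMod M)))

/-- The slab `Λ_N = {1,…,N} × (ℤ/Mℤ)^{d-1}`. -/
def slab (d M N : ℕ) : Set (MirrorPos d M) := {q | 1 ≤ q.1 ∧ q.1 ≤ (N : ℤ)}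

/-- The phase space `ℳ_N = Λ_N × 𝒫`. -/
def phaseSpace (d M N : ℕ) : Set (MirrorPos d M × MirrorVel d) :=
  {x | x.1 ∈ slab d M N}

/-- The velocity `e₁`. -/
def velPlus (d : ℕ) : MirrorVel d := (none, true)

/-- The velocity `-e₁`. -/
def velMinus (d : ℕ) : MirrorVel d := (none, false)

/-- Incoming boundary `I⁺_N = {(q, e₁) : q₁ = 1}`. -/
def inPlus (d M N : ℕ) : Set (MirrorPos d M × MirrorVel d) :=
  {x | x.1.1 = 1 ∧ x.2 = velPlus d}

/-- Incoming boundary `I⁻_N = {(q, -e₁) : q₁ = N}`. -/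
def inMinus (d M N : ℕ) : Set (MirrorPos d M × MirrorVel d) :=
  {x | x.1.1 = (N : ℤ) ∧ x.2 = velMinus d}

/-- Outgoing boundary `O⁺_N = {(q + e₁, e₁) : q₁ = N}`. -/
def outPlus (d M N : ℕ) : Set (MirrorPos d M × MirrorVel d) :=
  {x | x.1.1 = (N : ℤ) + 1 ∧ x.2 = velPlus d}

/-- Outgoing boundary `O⁻_N = {(q - e₁, -e₁) : q₁ = 1}`. -/
def outMinus (d M N : ℕ) : Set (MirrorPos d M × MirrorVel d) :=
  {x | x.1.1 = 0 ∧ x.2 = velMinus d}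

/-- A mirror configuration: at each site of the slab, a bijection of the
velocity set satisfying the reversibility condition `π(q; -π(q;p)) = -p` and
the no-U-turn condition `π(q;p) ≠ -p`. -/
def IsMirrorConfig (d M N : ℕ) (π : MirrorPos d M → (MirrorVel d ≃ MirrorVel d)) : Prop :=
  ∀ q ∈ slab d M N,
    (∀ p, π q (velNeg (π q p)) = velNeg p) ∧ ∀ p, π q p ≠ velNeg p

/-- The mirrors dynamics `F(q,p;π) = (q + π(q;p), π(q;p))`. -/
def mirrorF {d M : ℕ} (π : MirrorPos d M → (MirrorVel d ≃ MirrorVel d))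
    (x : MirrorPos d M × MirrorVel d) : MirrorPos d M × MirrorVel d :=
  (velMove x.1 (π x.1 x.2), π x.1 x.2)

/-- The exit time `n_x = inf {n ≥ 1 : Fⁿ(x;π) ∈ O_N}`. -/
noncomputable def exitTime {d M : ℕ} (N : ℕ)
    (π : MirrorPos d M → (MirrorVel d ≃ MirrorVel d))
    (x : MirrorPos d M × MirrorVel d) : ℕ :=
  sInf {n | 1 ≤ n ∧ (mirrorF π)^[n] x ∈ outPlus d M N ∪ outMinus d M N}

/-- The exit map `F_N(x;π) = F^{n_x}(x;π)`. -/
noncomputable def mirrorFN {d M : ℕ} (N : ℕ)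
    (π : MirrorPos d M → (MirrorVel d ≃ MirrorVel d))
    (x : MirrorPos d M × MirrorVel d) : MirrorPos d M × MirrorVel d :=
  (mirrorF π)^[exitTime N π x] x

/-
An incoming state `x ∈ I_N` has no preimage under `F` inside `ℳ_N`: its preimage would sit at
`q₁ = 0` or `q₁ = N + 1`. Since `F` is injective (each `π(q; ·)` is a bijection), an orbit
confined to the finite set `ℳ_N` for `|ℳ_N| + 1` steps would revisit a state, hence return to
`x`, giving `x` a preimage in `ℳ_N`. So the orbit leaves `ℳ_N` within `|ℳ_N| = 2d N M^{d-1}`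
steps, and a single step out of the slab can only land in `O_N`.
-/

open Finset Function

section Iterates

variable {α : Type*} {f : α → α}

theorem Function.Injective.exists_iterate_notMem {s : Finset α} {x : α} (hf : Injective f)
    (hx : ∀ y ∈ s, f y ≠ x) : ∃ n ≤ #s, f^[n] x ∉ s := by
  by_contra! hall
  obtain ⟨i, hi, j, hj, hij, heq⟩ :=
    exists_ne_map_eq_of_card_lt_of_maps_to (s := range (#s + 1)) (t := s)
      (f := fun n => f^[n] x) (by simp)
      (fun n hn => hall n (Nat.lt_succ_iff.mp (mem_range.mp hn)))
  rw [mem_range] at hi hj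
  wlog hlt : i < j generalizing i j
  · exact this j hj i hi hij.symm heq.symm (by omega)
  have hperiodic : f^[j - i] x = x :=
    hf.iterate i (by rw [← iterate_add_apply, Nat.add_sub_cancel' hlt.le]; exact heq.symm)
  obtain ⟨m, hm⟩ : ∃ m, j - i = m + 1 := ⟨j - i - 1, by omega⟩
  rw [hm, iterate_succ_apply'] at hperiodic
  exact hx _ (hall m (by omega)) hperiodic

theorem exists_iterate_first_notMem {s : Set α} {x : α} {n : ℕ} (hn : f^[n] x ∉ s) :
    ∃ m ≤ n, f^[m] x ∉ s ∧ ∀ k < m, f^[k] x ∈ s := by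
  classical
  have h : ∃ m, f^[m] x ∉ s := ⟨n, hn⟩
  exact ⟨Nat.find h, Nat.find_min' h hn, Nat.find_spec h,
    fun k hk => not_not.mp (Nat.find_min h hk)⟩

end Iterates

noncomputable def phaseFinset (d M N : ℕ) [NeZero M] : Finset (MirrorPos d M × MirrorVel d) :=
  (Icc (1 : ℤ) N ×ˢ univ) ×ˢ univ

section Mirrors

variable {d M N : ℕ}

theorem velMove_injective (v : MirrorVel d) :
    Injective (fun q : MirrorPos d M => velMove q v) := by
  rintro ⟨a₁, a₂⟩ ⟨b₁, b₂⟩ h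
  obtain ⟨_ | j, s⟩ := v
  · simp only [velMove, Prod.mk.injEq, add_left_inj] at h
    rw [h.1, h.2]
  · simp only [velMove, Prod.mk.injEq] at h
    obtain ⟨rfl, h₂⟩ := h
    simpa using congrArg (fun g => update g j (g j - (bsign s : ZMod M))) h₂

theorem mirrorF_injective (π : MirrorPos d M → (MirrorVel d ≃ MirrorVel d)) :
    Injective (mirrorF π) := by
  rintro ⟨q, p⟩ ⟨q', p'⟩ h
  simp only [mirrorF, Prod.mk.injEq] at h
  obtain ⟨hq, hv⟩ := h
  rw [hv] at hq
  obtain rfl := velMove_injective _ hq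
  rw [(π q).injective hv]

theorem mem_phaseSpace_of_mem_in (hN : 1 ≤ N) {x : MirrorPos d M × MirrorVel d}
    (hx : x ∈ inPlus d M N ∪ inMinus d M N) : x ∈ phaseSpace d M N := by
  simp only [phaseSpace, slab, Set.mem_ofPred_eq]
  rcases hx with ⟨h, -⟩ | ⟨h, -⟩ <;> rw [h] <;> omega

theorem mirrorF_ne_of_mem_in (π : MirrorPos d M → (MirrorVel d ≃ MirrorVel d))
    {x y : MirrorPos d M × MirrorVel d} (hx : x ∈ inPlus d M N ∪ inMinus d M N)
    (hy : y ∈ phaseSpace d M N) : mirrorF π y ≠ x := by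
  rintro rfl
  obtain ⟨hy₁, hy₂⟩ := hy
  rcases hx with ⟨hq, hp⟩ | ⟨hq, hp⟩ <;>
  · simp only [mirrorF] at hq hp
    simp [hp, velMove, velPlus, velMinus, bsign] at hq
    omega

theorem mirrorF_mem_out_of_notMem (π : MirrorPos d M → (MirrorVel d ≃ MirrorVel d))
    {y : MirrorPos d M × MirrorVel d} (hy : y ∈ phaseSpace d M N)
    (hFy : mirrorF π y ∉ phaseSpace d M N) : mirrorF π y ∈ outPlus d M N ∪ outMinus d M N := by
  obtain ⟨hy₁, hy₂⟩ := hy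
  rcases hp : π y.1 y.2 with ⟨_ | j, _ | _⟩ <;>
    simp [mirrorF, hp, phaseSpace, slab, outPlus, outMinus, velPlus, velMinus, velMove,
      bsign] at hFy ⊢ <;> omega

variable [NeZero M]

theorem mem_phaseFinset {x : MirrorPos d M × MirrorVel d} :
    x ∈ phaseFinset d M N ↔ x ∈ phaseSpace d M N := by
  simp [phaseFinset, phaseSpace, slab]

theorem card_phaseFinset (hd : 1 ≤ d) : #(phaseFinset d M N) = 2 * d * N * M ^ (d - 1) := by
  simp only [phaseFinset, card_product, Int.card_Icc, card_univ, Fintype.card_prod,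
    Fintype.card_fun, ZMod.card, Fintype.card_fin, Fintype.card_option, Fintype.card_bool,
    add_sub_cancel_right, Int.toNat_natCast, Nat.sub_add_cancel hd]
  ring

end Mirrors

theorem exitTime_spec {d M N n : ℕ} (π : MirrorPos d M → (MirrorVel d ≃ MirrorVel d))
    {x : MirrorPos d M × MirrorVel d} (hn : 1 ≤ n)
    (hexit : (mirrorF π)^[n] x ∈ outPlus d M N ∪ outMinus d M N) :
    1 ≤ exitTime N π x ∧ exitTime N π x ≤ n ∧
      (mirrorF π)^[exitTime N π x] x ∈ outPlus d M N ∪ outMinus d M N := by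
  have hmem := Nat.sInf_mem
    (s := {n | 1 ≤ n ∧ (mirrorF π)^[n] x ∈ outPlus d M N ∪ outMinus d M N}) ⟨n, hn, hexit⟩
  exact ⟨hmem.1, Nat.sInf_le ⟨hn, hexit⟩, hmem.2⟩

theorem mirrors_exit_time_bound_general (d M N : ℕ) (hd : 2 ≤ d) (hM : 1 ≤ M) (hN : 1 ≤ N)
    (π : MirrorPos d M → (MirrorVel d ≃ MirrorVel d))
    (x : MirrorPos d M × MirrorVel d) (hx : x ∈ inPlus d M N ∪ inMinus d M N) :
    (∃ n, 1 ≤ n ∧ n ≤ 2 * d * N * M ^ (d - 1) ∧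
      (mirrorF π)^[n] x ∈ outPlus d M N ∪ outMinus d M N ∧
      ∀ k < n, (mirrorF π)^[k] x ∈ phaseSpace d M N) ∧
    1 ≤ exitTime N π x ∧ exitTime N π x ≤ 2 * d * N * M ^ (d - 1) ∧
      (mirrorF π)^[exitTime N π x] x ∈ outPlus d M N ∪ outMinus d M N := by
  have : NeZero M := ⟨by omega⟩
  obtain ⟨n, hnK, hn⟩ := (mirrorF_injective π).exists_iterate_notMem (s := phaseFinset d M N)
    fun y hy => mirrorF_ne_of_mem_in π hx (mem_phaseFinset.mp hy)
  rw [card_phaseFinset (by omega)] at hnK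
  rw [mem_phaseFinset] at hn
  obtain ⟨m, hmn, hm, hbefore⟩ := exists_iterate_first_notMem hn
  obtain ⟨k, rfl⟩ : ∃ k, m = k + 1 := by
    refine Nat.exists_eq_add_one.mpr (Nat.pos_of_ne_zero ?_)
    rintro rfl
    exact hm (mem_phaseSpace_of_mem_in hN hx)
  have hexit : (mirrorF π)^[k + 1] x ∈ outPlus d M N ∪ outMinus d M N := by
    rw [iterate_succ_apply'] at hm ⊢
    exact mirrorF_mem_out_of_notMem π (hbefore k k.lt_succ_self) hm
  exact ⟨⟨k + 1, k.succ_pos, hmn.trans hnK, hexit, hbefore⟩,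
    (exitTime_spec π k.succ_pos hexit).imp_right (.imp_left (·.trans (hmn.trans hnK)))⟩

/-- For every mirror configuration `π` and every `x ∈ I_N`, there exists
`n` with `1 ≤ n ≤ 2d|Λ_N| = 2d N M^{d-1}` such that `Fⁿ(x;π) ∈ O_N`, all the
intermediate iterates lying in `ℳ_N`. In particular the exit time
`n_x = inf {n ≥ 1 : Fⁿ(x;π) ∈ O_N}` is finite (the infimum is attained) and at
most `2d N M^{d-1}`. -/
theorem mirrors_exit_time_bound (d M N : ℕ) (hd : 2 ≤ d) (hM : 1 ≤ M) (hN : 1 ≤ N)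
    (π : MirrorPos d M → (MirrorVel d ≃ MirrorVel d))
    (hπ : IsMirrorConfig d M N π)
    (x : MirrorPos d M × MirrorVel d) (hx : x ∈ inPlus d M N ∪ inMinus d M N) :
    (∃ n, 1 ≤ n ∧ n ≤ 2 * d * N * M ^ (d - 1) ∧
      (mirrorF π)^[n] x ∈ outPlus d M N ∪ outMinus d M N ∧
      ∀ k < n, (mirrorF π)^[k] x ∈ phaseSpace d M N) ∧
    1 ≤ exitTime N π x ∧ exitTime N π x ≤ 2 * d * N * M ^ (d - 1) ∧
      (mirrorF π)^[exitTime N π x] x ∈ outPlus d M N ∪ outMinus d M N :=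
  mirrors_exit_time_bound_general d M N hd hM hN π x hx
end

section
/- Let $d \ge 2$ and $N \ge 1$ be integers and suppose $u : \{0,1,\ldots,N+1\} \times \{+,-,0\} \to \mathbb{R}$ satisfies the boundary conditions $u(N+1,+) = 1$ and $u(0,-) = 0$, together with, for every $k$ with $1 \le k \le N$: $(2d-1)\,u(k,+) = u(k+1,+) + (2d-2)\,u(k,0)$; $(2d-1)\,u(k,0) = u(k+1,+) + u(k-1,-) + (2d-3)\,u(k,0)$; and $(2d-1)\,u(k,-) = u(k-1,-) + (2d-2)\,u(k,0)$. Then $u(1,+) = \dfrac{d}{d + (d-1)N}$; equivalently, writing $\hat\kappa_0 = d/(d-1)$, the crossing probability of the kinematic non-backtracking random walk on a slab of width $N$ is $\hat C_N = u(1,+) = \hat\kappa_0/(\hat\kappa_0 + N)$. -/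
/-- Direction label for the kinematic non-backtracking random walk projected on
the slab coordinate: moving right (`plus`), moving left (`minus`), or moving in
a transverse direction (`zero`). -/
inductive NBRWDir : Type
  | plus : NBRWDir
  | minus : NBRWDir
  | zero : NBRWDir

/-!
Eliminating the transverse value `u (k, 0)` leaves a two-term recursion along which the net
flux `u (k+1, +) - u (k, -)` is conserved; at the left wall it equals `u (1, +)` because
`u (0, -) = 0`. Each layer then raises `d * u (·, +)` by `(d - 1) * u (1, +)`, so
`d = d * u (N+1, +) = (d + (d - 1) * N) * u (1, +)`.
-/

namespace NBRWDir

variable {d : ℝ} {u : ℕ → NBRWDir → ℝ} {N k : ℕ}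

def Harmonic (d : ℝ) (u : ℕ → NBRWDir → ℝ) (k : ℕ) : Prop :=
  (2 * d - 1) * u k plus = u (k + 1) plus + (2 * d - 2) * u k zero ∧
  (2 * d - 1) * u k zero = u (k + 1) plus + u (k - 1) minus + (2 * d - 3) * u k zero ∧
  (2 * d - 1) * u k minus = u (k - 1) minus + (2 * d - 2) * u k zero

def flux (u : ℕ → NBRWDir → ℝ) (k : ℕ) : ℝ := u (k + 1) plus - u k minus

theorem Harmonic.flux_succ (h2d : 2 * d - 1 ≠ 0) (h : Harmonic d u (k + 1)) :
    flux u (k + 1) = flux u k := by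
  obtain ⟨hP, hZ, hM⟩ := h
  simp only [Nat.add_sub_cancel] at hZ hM
  refine mul_left_cancel₀ h2d ?_
  unfold flux
  linear_combination -hP - hM - (2 * d - 2) * hZ

theorem Harmonic.mul_plus_succ (h : Harmonic d u (k + 1)) :
    d * u (k + 1 + 1) plus = d * u (k + 1) plus + (d - 1) * flux u k := by
  obtain ⟨hP, hZ, -⟩ := h
  simp only [Nat.add_sub_cancel] at hZ
  unfold flux
  linear_combination -hP - (d - 1) * hZ

theorem flux_eq_flux_zero (h2d : 2 * d - 1 ≠ 0) (h : ∀ k, 1 ≤ k → k ≤ N → Harmonic d u k) :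
    ∀ k ≤ N, flux u k = flux u 0
  | 0, _ => rfl
  | k + 1, hk => by
    rw [(h (k + 1) (by omega) hk).flux_succ h2d, flux_eq_flux_zero h2d h k (by omega)]

theorem mul_plus_succ_eq (h2d : 2 * d - 1 ≠ 0) (h : ∀ k, 1 ≤ k → k ≤ N → Harmonic d u k) :
    ∀ k ≤ N, d * u (k + 1) plus = d * u 1 plus + k * (d - 1) * flux u 0
  | 0, _ => by simp
  | k + 1, hk => by
    rw [(h (k + 1) (by omega) hk).mul_plus_succ, mul_plus_succ_eq h2d h k (by omega),
      flux_eq_flux_zero h2d h k (by omega)]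
    push_cast
    ring

theorem plus_one_eq_div (h2d : 2 * d - 1 ≠ 0) (hden : d + (d - 1) * N ≠ 0)
    (hbp : u (N + 1) plus = 1) (hbm : u 0 minus = 0)
    (h : ∀ k, 1 ≤ k → k ≤ N → Harmonic d u k) :
    u 1 plus = d / (d + (d - 1) * N) := by
  have hN := mul_plus_succ_eq h2d h N le_rfl
  rw [hbp, flux, hbm] at hN
  rw [eq_div_iff hden]
  linear_combination -hN

end NBRWDir

theorem nbrw_crossing_probability_general (d N : ℕ) (hd : 2 ≤ d)
    (u : ℕ → NBRWDir → ℝ)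
    (hbp : u (N + 1) NBRWDir.plus = 1)
    (hbm : u 0 NBRWDir.minus = 0)
    (hplus : ∀ k, 1 ≤ k → k ≤ N →
      (2 * (d : ℝ) - 1) * u k NBRWDir.plus =
        u (k + 1) NBRWDir.plus + (2 * (d : ℝ) - 2) * u k NBRWDir.zero)
    (hzero : ∀ k, 1 ≤ k → k ≤ N →
      (2 * (d : ℝ) - 1) * u k NBRWDir.zero =
        u (k + 1) NBRWDir.plus + u (k - 1) NBRWDir.minus +
          (2 * (d : ℝ) - 3) * u k NBRWDir.zero)
    (hminus : ∀ k, 1 ≤ k → k ≤ N →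
      (2 * (d : ℝ) - 1) * u k NBRWDir.minus =
        u (k - 1) NBRWDir.minus + (2 * (d : ℝ) - 2) * u k NBRWDir.zero) :
    u 1 NBRWDir.plus = (d : ℝ) / ((d : ℝ) + ((d : ℝ) - 1) * (N : ℝ)) ∧
      u 1 NBRWDir.plus = ((d : ℝ) / ((d : ℝ) - 1)) / ((d : ℝ) / ((d : ℝ) - 1) + (N : ℝ)) := by
  have hd2 : (2 : ℝ) ≤ d := by exact_mod_cast hd
  have hd1 : (d : ℝ) - 1 ≠ 0 := by linarith
  have hden : (d : ℝ) + (d - 1) * N ≠ 0 :=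
    (add_pos_of_pos_of_nonneg (by linarith) (mul_nonneg (by linarith) N.cast_nonneg)).ne'
  have hcross := NBRWDir.plus_one_eq_div (by linarith) hden hbp hbm
    fun k hk hkN => ⟨hplus k hk hkN, hzero k hk hkN, hminus k hk hkN⟩
  refine ⟨hcross, hcross.trans ?_⟩
  field_simp

/-- The crossing probability of the kinematic non-backtracking random walk in
dimension `d` on a slab of width `N`: if `u (k, v)` solves the harmonic
(hitting-probability) equations with absorbing boundary values `u (N+1, +) = 1`
and `u (0, -) = 0`, then `u (1, +) = d / (d + (d-1) N)`; equivalently, with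
`κ̂₀ = d/(d-1)`, the crossing probability is `κ̂₀/(κ̂₀ + N)`. -/
theorem nbrw_crossing_probability (d N : ℕ) (hd : 2 ≤ d) (hN : 1 ≤ N)
    (u : ℕ → NBRWDir → ℝ)
    (hbp : u (N + 1) NBRWDir.plus = 1)
    (hbm : u 0 NBRWDir.minus = 0)
    (hplus : ∀ k, 1 ≤ k → k ≤ N →
      (2 * (d : ℝ) - 1) * u k NBRWDir.plus =
        u (k + 1) NBRWDir.plus + (2 * (d : ℝ) - 2) * u k NBRWDir.zero)
    (hzero : ∀ k, 1 ≤ k → k ≤ N →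
      (2 * (d : ℝ) - 1) * u k NBRWDir.zero =
        u (k + 1) NBRWDir.plus + u (k - 1) NBRWDir.minus +
          (2 * (d : ℝ) - 3) * u k NBRWDir.zero)
    (hminus : ∀ k, 1 ≤ k → k ≤ N →
      (2 * (d : ℝ) - 1) * u k NBRWDir.minus =
        u (k - 1) NBRWDir.minus + (2 * (d : ℝ) - 2) * u k NBRWDir.zero) :
    u 1 NBRWDir.plus = (d : ℝ) / ((d : ℝ) + ((d : ℝ) - 1) * (N : ℝ)) ∧
      u 1 NBRWDir.plus = ((d : ℝ) / ((d : ℝ) - 1)) / ((d : ℝ) / ((d : ℝ) - 1) + (N : ℝ)) :=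
  nbrw_crossing_probability_general d N hd u hbp hbm hplus hzero hminus
end
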